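/- arXiv:1804.02081 — 2 statements merged into one kernel-verified Lean document; each statement's English description precedes it below -/
import Mathlib

section
/- Let W be a symmetric N×N real matrix with nonnegative entries, positive degrees d_j := Σ_i W_{ij}, D := diag(d_1,…,d_N), H := W·D⁻¹, vol := Σ_j d_j, L̃ := D^{-1/2}(D−W)D^{-1/2}, and q₁ := D^{1/2}𝟙/√vol. Then for all probability vectors p₊, p₋ ∈ ℝ^N (nonnegative entries summing to 1) and every positive integer K, ‖H^K p₊ − H^K p₋‖ ≤ √(d_max) · ‖(I − L̃)^K − q₁q₁ᵀ‖ · (‖D^{-1/2}p₊‖ + ‖D^{-1/2}p₋‖), where d_max := max_i d_i and the matrix norm is the spectral norm. -/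
open Matrix Finset

/-- Euclidean norm of a vector in ℝ^N. -/
noncomputable def eNorm {N : ℕ} (x : Fin N → ℝ) : ℝ := Real.sqrt (∑ i, x i ^ 2)

/-- Spectral (ℓ2 operator) norm of a matrix: sup over v ≠ 0 of ‖Mv‖/‖v‖. -/
noncomputable def specNorm {N : ℕ} (M : Matrix (Fin N) (Fin N) ℝ) : ℝ :=
  sSup {r : ℝ | ∃ v : Fin N → ℝ, v ≠ 0 ∧ r = eNorm (M.mulVec v) / eNorm v}

/-!
Writing `S = D^{1/2}`, one has `I − L̃ = S⁻¹ W S⁻¹` and hence `H^K = S (I − L̃)^K S⁻¹`.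
Since `p₊` and `p₋` have the same total mass, `x = S⁻¹ (p₊ − p₋)` is orthogonal to `q₁`, so
subtracting the rank-one projection `q₁ q₁ᵀ` does not change `(I − L̃)^K x`. The bound then
follows from `‖S y‖ ≤ √d_max ‖y‖`, the defining property of the spectral norm and the triangle
inequality for `x`.
-/

section Norms

variable {n : ℕ}

lemma eNorm_eq_norm_toLp (x : Fin n → ℝ) : eNorm x = ‖WithLp.toLp 2 x‖ := by
  simp [EuclideanSpace.norm_eq, eNorm]

lemma eNorm_sub_le (x y : Fin n → ℝ) : eNorm (x - y) ≤ eNorm x + eNorm y := by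
  simpa only [eNorm_eq_norm_toLp, WithLp.toLp_sub] using norm_sub_le _ _

lemma eNorm_mul_le_sqrt_mul {c : ℝ} {s : Fin n → ℝ} (hs : ∀ i, s i ^ 2 ≤ c)
    (x : Fin n → ℝ) : eNorm (fun i => s i * x i) ≤ √c * eNorm x := by
  rw [eNorm, eNorm, ← Real.sqrt_mul' _ (by positivity), Finset.mul_sum]
  gcongr with i
  rw [mul_pow]
  exact mul_le_mul_of_nonneg_right (hs i) (sq_nonneg _)

lemma eNorm_mulVec_le_opNorm (M : Matrix (Fin n) (Fin n) ℝ) (x : Fin n → ℝ) :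
    eNorm (M *ᵥ x) ≤ ‖toEuclideanCLM (𝕜 := ℝ) M‖ * eNorm x := by
  simpa only [eNorm_eq_norm_toLp, toEuclideanCLM_toLp] using
    (toEuclideanCLM (𝕜 := ℝ) M).le_opNorm (WithLp.toLp 2 x)

lemma specNorm_nonneg (M : Matrix (Fin n) (Fin n) ℝ) : 0 ≤ specNorm M :=
  Real.sSup_nonneg fun _ ⟨_, _, hr⟩ =>
    hr ▸ div_nonneg (Real.sqrt_nonneg _) (Real.sqrt_nonneg _)

lemma eNorm_mulVec_le (M : Matrix (Fin n) (Fin n) ℝ) (x : Fin n → ℝ) :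
    eNorm (M *ᵥ x) ≤ specNorm M * eNorm x := by
  rcases eq_or_ne x 0 with rfl | hx
  · simp [eNorm]
  have hx_pos : 0 < eNorm x := by
    rw [eNorm_eq_norm_toLp, norm_pos_iff]
    exact fun h => hx (congrArg WithLp.ofLp h)
  have hbdd : BddAbove {r : ℝ | ∃ v : Fin n → ℝ, v ≠ 0 ∧ r = eNorm (M *ᵥ v) / eNorm v} := by
    refine ⟨‖toEuclideanCLM (𝕜 := ℝ) M‖, fun _ ⟨v, hv, hr⟩ => hr ▸ ?_⟩
    exact div_le_of_le_mul₀ (eNorm_eq_norm_toLp v ▸ norm_nonneg _) (norm_nonneg _)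
      (eNorm_mulVec_le_opNorm M v)
  exact (div_le_iff₀ hx_pos).1 (le_csSup hbdd ⟨x, hx, rfl⟩)

end Norms

section Diffusion

variable {ι : Type*} [Fintype ι] {d : ι → ℝ}

lemma dotProduct_inv_sqrt_mul {vol : ℝ} {q : ι → ℝ} (hd : ∀ i, 0 < d i)
    (hq : ∀ i, q i = √(d i) / √vol) (p : ι → ℝ) :
    q ⬝ᵥ (fun i => (√(d i))⁻¹ * p i) = (√vol)⁻¹ * ∑ i, p i := by
  rw [dotProduct, Finset.mul_sum]
  refine Finset.sum_congr rfl fun i _ => ?_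
  rw [hq i]
  field_simp [(Real.sqrt_pos.2 (hd i)).ne']

variable [DecidableEq ι]

lemma diagonal_sqrt_mul_diagonal_inv_sqrt (hd : ∀ i, 0 < d i) :
    diagonal (fun i => √(d i)) * diagonal (fun i => (√(d i))⁻¹) = 1 := by
  rw [diagonal_mul_diagonal, ← diagonal_one]
  exact congrArg diagonal (funext fun i => mul_inv_cancel₀ (Real.sqrt_pos.2 (hd i)).ne')

lemma diagonal_inv_sqrt_mul_diagonal_sqrt (hd : ∀ i, 0 < d i) :
    diagonal (fun i => (√(d i))⁻¹) * diagonal (fun i => √(d i)) = 1 := by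
  rw [diagonal_mul_diagonal, ← diagonal_one]
  exact congrArg diagonal (funext fun i => inv_mul_cancel₀ (Real.sqrt_pos.2 (hd i)).ne')

lemma diagonal_inv_sqrt_mul_self (hd : ∀ i, 0 < d i) :
    diagonal (fun i => (√(d i))⁻¹) * diagonal (fun i => (√(d i))⁻¹) =
      diagonal (fun i => (d i)⁻¹) := by
  rw [diagonal_mul_diagonal]
  exact congrArg diagonal (funext fun i => by rw [← mul_inv, Real.mul_self_sqrt (hd i).le])

lemma one_sub_normalizedLaplacian_eq (hd : ∀ i, 0 < d i) (W : Matrix ι ι ℝ) :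
    1 - diagonal (fun i => (√(d i))⁻¹) * (diagonal d - W) * diagonal (fun i => (√(d i))⁻¹) =
      diagonal (fun i => (√(d i))⁻¹) * W * diagonal (fun i => (√(d i))⁻¹) := by
  have hD :
      diagonal (fun i => (√(d i))⁻¹) * diagonal d * diagonal (fun i => (√(d i))⁻¹) = 1 := by
    rw [diagonal_mul_diagonal, diagonal_mul_diagonal, ← diagonal_one]
    refine congrArg diagonal (funext fun i => ?_)
    rw [mul_right_comm, ← mul_inv, Real.mul_self_sqrt (hd i).le, inv_mul_cancel₀ (hd i).ne']
  rw [mul_sub, sub_mul, hD, sub_sub_cancel]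

lemma mul_diagonal_inv_pow_eq_conj (hd : ∀ i, 0 < d i) (W : Matrix ι ι ℝ) (K : ℕ) :
    (W * diagonal (fun i => (d i)⁻¹)) ^ K =
      diagonal (fun i => √(d i)) *
        (diagonal (fun i => (√(d i))⁻¹) * W * diagonal (fun i => (√(d i))⁻¹)) ^ K *
        diagonal (fun i => (√(d i))⁻¹) := by
  have hconj : W * diagonal (fun i => (d i)⁻¹) =
      diagonal (fun i => √(d i)) *
        (diagonal (fun i => (√(d i))⁻¹) * W * diagonal (fun i => (√(d i))⁻¹)) *
        diagonal (fun i => (√(d i))⁻¹) := by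
    rw [mul_assoc, mul_assoc, mul_assoc, ← mul_assoc (diagonal _),
      diagonal_sqrt_mul_diagonal_inv_sqrt hd, one_mul, diagonal_inv_sqrt_mul_self hd]
  rw [hconj]
  exact Units.conj_pow ⟨_, _, diagonal_sqrt_mul_diagonal_inv_sqrt hd,
    diagonal_inv_sqrt_mul_diagonal_sqrt hd⟩ _ K

end Diffusion

theorem diffusion_difference_spectral_bound_general
    (N : ℕ) (W : Matrix (Fin (N + 1)) (Fin (N + 1)) ℝ)
    (d : Fin (N + 1) → ℝ)
    (hdpos : ∀ j, 0 < d j)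
    (H : Matrix (Fin (N + 1)) (Fin (N + 1)) ℝ)
    (hH : H = W * Matrix.diagonal (fun j => (d j)⁻¹))
    (vol : ℝ)
    (Ltil : Matrix (Fin (N + 1)) (Fin (N + 1)) ℝ)
    (hLtil : Ltil = Matrix.diagonal (fun j => (Real.sqrt (d j))⁻¹) *
      (Matrix.diagonal d - W) * Matrix.diagonal (fun j => (Real.sqrt (d j))⁻¹))
    (q₁ : Fin (N + 1) → ℝ) (hq₁ : ∀ i, q₁ i = Real.sqrt (d i) / Real.sqrt vol)
    (dmax : ℝ) (hdmax : dmax = Finset.univ.sup' Finset.univ_nonempty d)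
    (pp pm : Fin (N + 1) → ℝ)
    (hppsum : ∑ i, pp i = 1)
    (hpmsum : ∑ i, pm i = 1)
    (K : ℕ) :
    eNorm ((H ^ K).mulVec pp - (H ^ K).mulVec pm) ≤
      Real.sqrt dmax * specNorm ((1 - Ltil) ^ K - Matrix.vecMulVec q₁ q₁) *
        (eNorm (fun i => (Real.sqrt (d i))⁻¹ * pp i) +
          eNorm (fun i => (Real.sqrt (d i))⁻¹ * pm i)) := by
  set M := (1 - Ltil) ^ K - vecMulVec q₁ q₁
  set x : Fin (N + 1) → ℝ :=
    (fun i => (√(d i))⁻¹ * pp i) - fun i => (√(d i))⁻¹ * pm i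
  have hx_orth : q₁ ⬝ᵥ x = 0 := by
    rw [dotProduct_sub, dotProduct_inv_sqrt_mul hdpos hq₁, dotProduct_inv_sqrt_mul hdpos hq₁,
      hppsum, hpmsum, sub_self]
  have hHK : H ^ K = diagonal (fun i => √(d i)) * (1 - Ltil) ^ K *
      diagonal (fun i => (√(d i))⁻¹) := by
    rw [hH, hLtil, one_sub_normalizedLaplacian_eq hdpos, mul_diagonal_inv_pow_eq_conj hdpos]
  have hdiff : (H ^ K) *ᵥ pp - (H ^ K) *ᵥ pm = fun i => √(d i) * (M *ᵥ x) i := by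
    have hx_eq : diagonal (fun i => (√(d i))⁻¹) *ᵥ (pp - pm) = x := by
      ext i
      simp [x, mulVec_diagonal, mul_sub]
    rw [sub_mulVec, vecMulVec_mulVec, hx_orth, MulOpposite.op_zero, zero_smul, sub_zero,
      ← mulVec_sub, hHK, ← mulVec_mulVec, ← mulVec_mulVec, hx_eq]
    exact funext (mulVec_diagonal _ _)
  have hd_le : ∀ i, √(d i) ^ 2 ≤ dmax := fun i => by
    rw [Real.sq_sqrt (hdpos i).le, hdmax]
    exact Finset.le_sup' d (Finset.mem_univ i)
  calc eNorm ((H ^ K) *ᵥ pp - (H ^ K) *ᵥ pm)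
      ≤ √dmax * eNorm (M *ᵥ x) := hdiff ▸ eNorm_mul_le_sqrt_mul hd_le _
    _ ≤ √dmax * (specNorm M * eNorm x) := by gcongr; exact eNorm_mulVec_le M x
    _ ≤ _ := by
      rw [← mul_assoc]
      gcongr
      · exact mul_nonneg (Real.sqrt_nonneg _) (specNorm_nonneg M)
      · exact eNorm_sub_le _ _

/-- for probability vectors p₊, p₋,
‖H^K p₊ − H^K p₋‖ ≤ √(d_max)·‖(I − L̃)^K − q₁q₁ᵀ‖·(‖D^{-1/2}p₊‖ + ‖D^{-1/2}p₋‖). -/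
theorem diffusion_difference_spectral_bound
    (N : ℕ) (W : Matrix (Fin (N + 1)) (Fin (N + 1)) ℝ)
    (hsym : W.IsSymm) (hnn : ∀ i j, 0 ≤ W i j)
    (d : Fin (N + 1) → ℝ) (hd : ∀ j, d j = ∑ i, W i j)
    (hdpos : ∀ j, 0 < d j)
    (H : Matrix (Fin (N + 1)) (Fin (N + 1)) ℝ)
    (hH : H = W * Matrix.diagonal (fun j => (d j)⁻¹))
    (vol : ℝ) (hvol : vol = ∑ j, d j)
    (Ltil : Matrix (Fin (N + 1)) (Fin (N + 1)) ℝ)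
    (hLtil : Ltil = Matrix.diagonal (fun j => (Real.sqrt (d j))⁻¹) *
      (Matrix.diagonal d - W) * Matrix.diagonal (fun j => (Real.sqrt (d j))⁻¹))
    (q₁ : Fin (N + 1) → ℝ) (hq₁ : ∀ i, q₁ i = Real.sqrt (d i) / Real.sqrt vol)
    (dmax : ℝ) (hdmax : dmax = Finset.univ.sup' Finset.univ_nonempty d)
    (pp pm : Fin (N + 1) → ℝ)
    (hppnn : ∀ i, 0 ≤ pp i) (hppsum : ∑ i, pp i = 1)
    (hpmnn : ∀ i, 0 ≤ pm i) (hpmsum : ∑ i, pm i = 1)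
    (K : ℕ) (hK : 1 ≤ K) :
    eNorm ((H ^ K).mulVec pp - (H ^ K).mulVec pm) ≤
      Real.sqrt dmax * specNorm ((1 - Ltil) ^ K - Matrix.vecMulVec q₁ q₁) *
        (eNorm (fun i => (Real.sqrt (d i))⁻¹ * pp i) +
          eNorm (fun i => (Real.sqrt (d i))⁻¹ * pm i)) :=
  diffusion_difference_spectral_bound_general N W d hdpos H hH vol Ltil hLtil q₁ hq₁ dmax hdmax pp
    pm hppsum hpmsum K
end

section
/- Let W be a symmetric N×N real matrix with nonnegative entries, positive degrees d_j := Σ_i W_{ij}, D := diag(d_1,…,d_N), H := W·D⁻¹, vol := Σ_j d_j, and L̃ := D^{-1/2}(D−W)D^{-1/2}. Suppose L̃ has an orthonormal eigenbasis with eigenvalues 0 = μ_1 < μ_2 ≤ … ≤ μ_N (eigenvalue 0 simple), and set μ' := min{μ_2, 2−μ_N}. Then for every nonempty subset S ⊆ {1,…,N} and every positive integer K, ‖H^K·v_S − d/vol‖ ≤ √(d_max/(d_min(S)·|S|))·e^{−K·μ'}, where d ∈ ℝ^N is the degree vector, d_max := max_i d_i, and d_min(S) := min_{i∈S} d_i.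 -/
open Matrix Finset

/-!
Put `s = √d` and `M = D^{-1/2} W D^{-1/2} = 1 - L̃`. Conjugation by `D^{1/2}` turns the random walk
`H = W D⁻¹` into `M`, so `H^K v_S = D^{1/2} M^K x` with `x = D^{-1/2} v_S`. As `M s = s` and the
eigenvalue `0` of `L̃` is simple, the eigenvector `q₀` is parallel to `s`; the `q₀`-component of
`M^K x` is therefore `(s ⬝ x / s ⬝ s) s = s / vol`, which `D^{1/2}` maps to `d / vol`. All other
components are damped by `|1 - μᵢ| ≤ 1 - μ' ≤ e^{-μ'}`, and it remains to use
`‖D^{1/2} y‖² ≤ d_max ‖y‖²` and `‖x‖² = Σ_{i ∈ S} 1 / (|S|² dᵢ) ≤ 1 / (d_min(S) |S|)`.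
-/

namespace Matrix

variable {ι R : Type*} [Fintype ι] [CommRing R]

theorem IsSymm.dotProduct_eq_zero_of_mulVec_eq_smul [IsDomain R] {A : Matrix ι ι R}
    (hA : A.IsSymm) {u v : ι → R} {a b : R} (hu : A *ᵥ u = a • u) (hv : A *ᵥ v = b • v)
    (hab : a ≠ b) : u ⬝ᵥ v = 0 := by
  have h : a * (u ⬝ᵥ v) = b * (u ⬝ᵥ v) :=
    calc a * (u ⬝ᵥ v) = A *ᵥ u ⬝ᵥ v := by rw [hu, smul_dotProduct, smul_eq_mul]
      _ = u ⬝ᵥ A *ᵥ v := by rw [dotProduct_mulVec, ← mulVec_transpose, hA.eq]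
      _ = b * (u ⬝ᵥ v) := by rw [hv, dotProduct_smul, smul_eq_mul]
  exact (mul_eq_mul_right_iff.mp h).resolve_left hab

variable [DecidableEq ι]

theorem sum_mulVec_sq_of_transpose_mul_eq_one {Q : Matrix ι ι R} (hQ : Qᵀ * Q = 1)
    (x : ι → R) : ∑ j, (Q *ᵥ x) j ^ 2 = ∑ j, x j ^ 2 := by
  have h : Q *ᵥ x ⬝ᵥ Q *ᵥ x = x ⬝ᵥ x := by
    rw [dotProduct_mulVec, ← mulVec_transpose, mulVec_mulVec, hQ, one_mulVec]
  simpa only [dotProduct, sq] using h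

variable {A Q : Matrix ι ι R} {e : ι → R}

theorem mul_transpose_eq_transpose_mul_diagonal (h : ∀ i, A *ᵥ Q i = e i • Q i) :
    A * Qᵀ = Qᵀ * diagonal e := by
  ext j i
  rw [mul_diagonal, transpose_apply]
  simpa [mul_apply, mulVec, dotProduct, mul_comm] using congrFun (h i) j

theorem pow_mulVec_eq_transpose_mulVec (hQ : Qᵀ * Q = 1) (h : ∀ i, A *ᵥ Q i = e i • Q i)
    (K : ℕ) (x : ι → R) : A ^ K *ᵥ x = Qᵀ *ᵥ fun i => e i ^ K * (Q *ᵥ x) i := by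
  have hconj : SemiconjBy Qᵀ (diagonal e) A := (mul_transpose_eq_transpose_mul_diagonal h).symm
  calc A ^ K *ᵥ x = A ^ K *ᵥ Qᵀ *ᵥ Q *ᵥ x := by rw [mulVec_mulVec x, hQ, one_mulVec]
    _ = Qᵀ *ᵥ diagonal e ^ K *ᵥ Q *ᵥ x := by
      rw [mulVec_mulVec (Q *ᵥ x), mulVec_mulVec (Q *ᵥ x), (hconj.pow_right K).eq]
    _ = Qᵀ *ᵥ fun i => e i ^ K * (Q *ᵥ x) i := by
      rw [diagonal_pow]; congr 1; ext i; rw [mulVec_diagonal, Pi.pow_apply]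

theorem eq_smul_of_forall_row_dotProduct_eq_zero (hQ : Qᵀ * Q = 1) {i₀ : ι} {v : ι → R}
    (h : ∀ i ≠ i₀, Q i ⬝ᵥ v = 0) : v = (Q i₀ ⬝ᵥ v) • Q i₀ := by
  calc v = Qᵀ *ᵥ Q *ᵥ v := by rw [mulVec_mulVec, hQ, one_mulVec]
    _ = ∑ i, (Q i ⬝ᵥ v) • Q i := by rw [mulVec_transpose, vecMul_eq_sum]; rfl
    _ = (Q i₀ ⬝ᵥ v) • Q i₀ := Fintype.sum_eq_single i₀ fun i hi => by rw [h i hi, zero_smul]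

theorem sum_sq_pow_mulVec_sub_le {A Q : Matrix ι ι ℝ} {e : ι → ℝ} (hQ : Q * Qᵀ = 1)
    (h : ∀ i, A *ᵥ Q i = e i • Q i) {i₀ : ι} {r : ℝ} (hr : ∀ i ≠ i₀, |e i| ≤ r) (K : ℕ)
    (x : ι → ℝ) :
    ∑ j, (A ^ K *ᵥ x - (e i₀ ^ K * (Q *ᵥ x) i₀) • Q i₀) j ^ 2 ≤
      (r ^ K) ^ 2 * ∑ j, x j ^ 2 := by
  set c := Q *ᵥ x
  set f : ι → ℝ := fun i => e i ^ K * c i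
  set b : ι → ℝ := f - Pi.single i₀ (f i₀)
  have hy : A ^ K *ᵥ x - f i₀ • Q i₀ = Qᵀ *ᵥ b := by
    rw [mulVec_sub, mulVec_single, pow_mulVec_eq_transpose_mulVec (mul_eq_one_comm.mp hQ) h]
    congr 1
    ext j
    exact mul_comm _ _
  have hb : ∀ i, b i ^ 2 ≤ (r ^ K) ^ 2 * c i ^ 2 := by
    intro i
    simp only [b]
    rcases eq_or_ne i i₀ with rfl | hi
    · rw [Pi.sub_apply, Pi.single_eq_same, sub_self, zero_pow two_ne_zero]
      positivity
    · rw [Pi.sub_apply, Pi.single_eq_of_ne hi, sub_zero, mul_pow, ← sq_abs (e i ^ K), abs_pow]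
      gcongr
      exact hr i hi
  calc ∑ j, (A ^ K *ᵥ x - f i₀ • Q i₀) j ^ 2 = ∑ i, b i ^ 2 := by
        rw [hy, sum_mulVec_sq_of_transpose_mul_eq_one (by rwa [transpose_transpose])]
    _ ≤ ∑ i, (r ^ K) ^ 2 * c i ^ 2 := sum_le_sum fun i _ => hb i
    _ = (r ^ K) ^ 2 * ∑ j, x j ^ 2 := by
        rw [← mul_sum, sum_mulVec_sq_of_transpose_mul_eq_one (mul_eq_one_comm.mp hQ)]

end Matrix

theorem dotProduct_smul_eq_of_eq_smul {ι K : Type*} [Fintype ι] [Field K] {u s : ι → K} {t : K}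
    (hu : u ⬝ᵥ u = 1) (hs : s = t • u) (ht : t ≠ 0) (x : ι → K) :
    (u ⬝ᵥ x) • u = (s ⬝ᵥ x / s ⬝ᵥ s) • s := by
  rw [hs, smul_dotProduct, smul_dotProduct, dotProduct_smul, hu, smul_smul]
  congr 1
  simp only [smul_eq_mul, mul_one]
  field_simp

section NormalizedLaplacian

variable {ι : Type*} [Fintype ι] [DecidableEq ι] (d : ι → ℝ) (W : Matrix ι ι ℝ)

noncomputable def normalizedAdjacency : Matrix ι ι ℝ :=
  diagonal (fun j => (√(d j))⁻¹) * W * diagonal (fun j => (√(d j))⁻¹)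

noncomputable def normalizedLaplacian : Matrix ι ι ℝ :=
  diagonal (fun j => (√(d j))⁻¹) * (diagonal d - W) * diagonal (fun j => (√(d j))⁻¹)

variable {d W}

theorem normalizedLaplacian_eq_one_sub (hd : ∀ j, 0 < d j) :
    normalizedLaplacian d W = 1 - normalizedAdjacency d W := by
  have h : (fun j => (√(d j))⁻¹ * d j * (√(d j))⁻¹) = fun _ => 1 := by
    ext j
    rw [inv_mul_eq_div, Real.div_sqrt, mul_inv_cancel₀ (Real.sqrt_pos.mpr (hd j)).ne']
  rw [normalizedLaplacian, normalizedAdjacency, mul_sub, sub_mul, diagonal_mul_diagonal,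
    diagonal_mul_diagonal, h, diagonal_one]

theorem normalizedAdjacency_isSymm (hW : W.IsSymm) : (normalizedAdjacency d W).IsSymm := by
  rw [IsSymm, normalizedAdjacency, transpose_mul, transpose_mul, diagonal_transpose, hW.eq,
    Matrix.mul_assoc]

theorem normalizedAdjacency_mulVec_sqrt (hW : ∀ i, ∑ j, W i j = d i) (hd : ∀ j, 0 < d j) :
    normalizedAdjacency d W *ᵥ (fun j => √(d j)) = fun j => √(d j) := by
  have h : diagonal (fun j => (√(d j))⁻¹) *ᵥ (fun j => √(d j)) = 1 := by
    ext j
    rw [mulVec_diagonal, Pi.one_apply, inv_mul_cancel₀ (Real.sqrt_pos.mpr (hd j)).ne']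
  ext i
  rw [normalizedAdjacency, ← mulVec_mulVec, ← mulVec_mulVec, h, mulVec_diagonal]
  simp only [mulVec, dotProduct, Pi.one_apply, mul_one]
  rw [hW, inv_mul_eq_div, Real.div_sqrt]

theorem diagonal_sqrt_mul_normalizedAdjacency_pow (hd : ∀ j, 0 < d j) (K : ℕ) :
    diagonal (fun j => √(d j)) * normalizedAdjacency d W ^ K =
      (W * diagonal (fun j => (d j)⁻¹)) ^ K * diagonal (fun j => √(d j)) := by
  refine SemiconjBy.pow_right ?_ K
  have h₁ : diagonal (fun j => √(d j)) * diagonal (fun j => (√(d j))⁻¹) = 1 := by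
    rw [diagonal_mul_diagonal, ← diagonal_one]
    congr 1; ext j
    exact mul_inv_cancel₀ (Real.sqrt_pos.mpr (hd j)).ne'
  have h₂ : diagonal (fun j => (d j)⁻¹) * diagonal (fun j => √(d j)) =
      diagonal (fun j => (√(d j))⁻¹) := by
    rw [diagonal_mul_diagonal]
    congr 1; ext j
    exact (inv_mul_eq_div _ _).trans Real.sqrt_div_self
  rw [SemiconjBy, normalizedAdjacency, ← Matrix.mul_assoc, ← Matrix.mul_assoc, h₁, Matrix.one_mul,
    Matrix.mul_assoc, h₂]

end NormalizedLaplacian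

section Seed

variable {ι : Type*} [Fintype ι] [DecidableEq ι]

noncomputable def seedVector (S : Finset ι) : ι → ℝ := fun i => if i ∈ S then (#S : ℝ)⁻¹ else 0

theorem sum_seedVector {S : Finset ι} (hS : S.Nonempty) : ∑ i, seedVector S i = 1 := by
  simp only [seedVector]
  rw [sum_ite_mem, univ_inter, sum_const, nsmul_eq_mul,
    mul_inv_cancel₀ (Nat.cast_ne_zero.mpr hS.card_pos.ne')]

theorem sum_seedVector_sq_div_le {S : Finset ι} (hS : S.Nonempty) {d : ι → ℝ}
    (hd : ∀ i ∈ S, 0 < d i) : ∑ i, seedVector S i ^ 2 / d i ≤ (S.inf' hS d * #S)⁻¹ := by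
  have hmin : 0 < S.inf' hS d := (lt_inf'_iff hS).mpr hd
  calc ∑ i, seedVector S i ^ 2 / d i = ∑ i ∈ S, (#S : ℝ)⁻¹ ^ 2 / d i := by
        simp only [seedVector, ite_pow, ne_eq, OfNat.ofNat_ne_zero, not_false_eq_true, zero_pow,
          ite_div, zero_div, sum_ite_mem, univ_inter]
    _ ≤ ∑ i ∈ S, (#S : ℝ)⁻¹ ^ 2 / S.inf' hS d := by
        gcongr with i hi
        exact inf'_le d hi
    _ = (S.inf' hS d * #S)⁻¹ := by
        rw [sum_const, nsmul_eq_mul]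
        field_simp

end Seed

theorem abs_one_sub_le_one_sub_min {n : ℕ} {μ : Fin (n + 2) → ℝ} (hμ : Monotone μ)
    {i : Fin (n + 2)} (hi : i ≠ 0) : |1 - μ i| ≤ 1 - min (μ 1) (2 - μ (Fin.last (n + 1))) := by
  have h₁ : μ 1 ≤ μ i := hμ (Fin.one_le_of_ne_zero hi)
  have h₂ : μ i ≤ μ (Fin.last (n + 1)) := hμ (Fin.le_last i)
  rw [abs_le]
  constructor <;> linarith [min_le_left (μ 1) (2 - μ (Fin.last (n + 1))),
    min_le_right (μ 1) (2 - μ (Fin.last (n + 1)))]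

section RandomWalk

variable {ι : Type*} [Fintype ι] [DecidableEq ι] {d : ι → ℝ} {W : Matrix ι ι ℝ}

theorem sum_sq_randomWalk_pow_mulVec_sub_le [Nonempty ι] (hW : W.IsSymm)
    (hdW : ∀ j, d j = ∑ i, W i j) (hd : ∀ j, 0 < d j) {Q : Matrix ι ι ℝ} (hQ : Q * Qᵀ = 1)
    {e : ι → ℝ} (he : ∀ i, normalizedAdjacency d W *ᵥ Q i = e i • Q i) {i₀ : ι}
    (he₀ : e i₀ = 1) (hne : ∀ i ≠ i₀, e i ≠ 1) {r : ℝ} (hr : ∀ i ≠ i₀, |e i| ≤ r)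
    {v : ι → ℝ} (hv : ∑ j, v j = 1) (K : ℕ) :
    ∑ j, ((W * diagonal (fun j => (d j)⁻¹)) ^ K *ᵥ v - (∑ j, d j)⁻¹ • d) j ^ 2 ≤
      univ.sup' univ_nonempty d * (r ^ K) ^ 2 * ∑ j, v j ^ 2 / d j := by
  have hWd : ∀ i, ∑ j, W i j = d i := fun i => by
    rw [hdW]; exact sum_congr rfl fun j _ => hW.apply j i
  set s : ι → ℝ := fun j => √(d j)
  set x : ι → ℝ := fun j => v j / s j
  have hs : s = (Q i₀ ⬝ᵥ s) • Q i₀ :=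
    eq_smul_of_forall_row_dotProduct_eq_zero (mul_eq_one_comm.mp hQ) fun i hi =>
      (normalizedAdjacency_isSymm hW).dotProduct_eq_zero_of_mulVec_eq_smul (he i)
        ((normalizedAdjacency_mulVec_sqrt hWd hd).trans (one_smul ℝ s).symm) (hne i hi)
  have hsx : s ⬝ᵥ x = 1 := by
    simp only [dotProduct, s, x, mul_div_cancel₀ _ (Real.sqrt_pos.mpr (hd _)).ne', hv]
  have hss : s ⬝ᵥ s = ∑ j, d j := by
    simp only [dotProduct, s, Real.mul_self_sqrt (hd _).le]
  have hunit : Q i₀ ⬝ᵥ Q i₀ = 1 := by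
    simpa [mul_apply, dotProduct] using congrFun (congrFun hQ i₀) i₀
  have ht : Q i₀ ⬝ᵥ s ≠ 0 := by
    intro h0
    rw [hs, h0, zero_smul, zero_dotProduct] at hsx
    exact zero_ne_one hsx
  have hproj : (e i₀ ^ K * (Q *ᵥ x) i₀) • Q i₀ = (∑ j, d j)⁻¹ • s := by
    rw [he₀, one_pow, one_mul, show (Q *ᵥ x) i₀ = Q i₀ ⬝ᵥ x from rfl,
      dotProduct_smul_eq_of_eq_smul hunit hs ht, hsx, hss, one_div]
  have hvx : v = diagonal s *ᵥ x := by
    ext j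
    rw [mulVec_diagonal, mul_div_cancel₀ _ (Real.sqrt_pos.mpr (hd j)).ne']
  have hds : d = diagonal s *ᵥ s := by
    ext j
    rw [mulVec_diagonal, Real.mul_self_sqrt (hd j).le]
  have hres : (W * diagonal (fun j => (d j)⁻¹)) ^ K *ᵥ v - (∑ j, d j)⁻¹ • d =
      diagonal s *ᵥ (normalizedAdjacency d W ^ K *ᵥ x - (e i₀ ^ K * (Q *ᵥ x) i₀) • Q i₀) := by
    rw [hproj, mulVec_sub, mulVec_smul, mulVec_mulVec, diagonal_sqrt_mul_normalizedAdjacency_pow hd,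
      ← mulVec_mulVec, ← hvx, ← hds]
  set y := normalizedAdjacency d W ^ K *ᵥ x - (e i₀ ^ K * (Q *ᵥ x) i₀) • Q i₀
  have hsup : 0 ≤ univ.sup' univ_nonempty d :=
    (hd (Classical.arbitrary ι)).le.trans (le_sup' d (mem_univ _))
  calc ∑ j, ((W * diagonal (fun j => (d j)⁻¹)) ^ K *ᵥ v - (∑ j, d j)⁻¹ • d) j ^ 2
      = ∑ j, d j * y j ^ 2 := by
        simp only [hres, mulVec_diagonal, mul_pow, s, Real.sq_sqrt (hd _).le]
    _ ≤ ∑ j, univ.sup' univ_nonempty d * y j ^ 2 := by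
        gcongr with j; exact le_sup' d (mem_univ j)
    _ ≤ univ.sup' univ_nonempty d * ((r ^ K) ^ 2 * ∑ j, x j ^ 2) := by
        rw [← mul_sum]
        gcongr
        exact sum_sq_pow_mulVec_sub_le hQ he hr K x
    _ = univ.sup' univ_nonempty d * (r ^ K) ^ 2 * ∑ j, v j ^ 2 / d j := by
        simp only [x, s, div_pow, Real.sq_sqrt (hd _).le, mul_assoc]

end RandomWalk

theorem seed_diffusion_stationary_convergence_bound_general
    (N : ℕ) (W : Matrix (Fin (N + 2)) (Fin (N + 2)) ℝ)
    (hsym : W.IsSymm)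
    (d : Fin (N + 2) → ℝ) (hd : ∀ j, d j = ∑ i, W i j)
    (hdpos : ∀ j, 0 < d j)
    (H : Matrix (Fin (N + 2)) (Fin (N + 2)) ℝ)
    (hH : H = W * Matrix.diagonal (fun j => (d j)⁻¹))
    (vol : ℝ) (hvol : vol = ∑ j, d j)
    (Ltil : Matrix (Fin (N + 2)) (Fin (N + 2)) ℝ)
    (hLtil : Ltil = Matrix.diagonal (fun j => (Real.sqrt (d j))⁻¹) *
      (Matrix.diagonal d - W) * Matrix.diagonal (fun j => (Real.sqrt (d j))⁻¹))
    (q : Fin (N + 2) → (Fin (N + 2) → ℝ)) (μ : Fin (N + 2) → ℝ)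
    (horth : ∀ i j, q i ⬝ᵥ q j = if i = j then 1 else 0)
    (heig : ∀ i, Ltil.mulVec (q i) = μ i • q i)
    (hmono : Monotone μ) (hμ0 : μ 0 = 0) (hsimple : ∀ i, i ≠ 0 → 0 < μ i)
    (μ' : ℝ) (hμ' : μ' = min (μ 1) (2 - μ (Fin.last (N + 1))))
    (dmax : ℝ) (hdmax : dmax = Finset.univ.sup' Finset.univ_nonempty d)
    (S : Finset (Fin (N + 2))) (hS : S.Nonempty)
    (vS : Fin (N + 2) → ℝ)
    (hvS : ∀ i, vS i = if i ∈ S then ((S.card : ℝ))⁻¹ else 0)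
    (dminS : ℝ) (hdminS : dminS = S.inf' hS d)
    (K : ℕ) :
    eNorm ((H ^ K).mulVec vS - fun i => d i / vol) ≤
      Real.sqrt (dmax / (dminS * (S.card : ℝ))) * Real.exp (-(K : ℝ) * μ') := by
  have hQ : of q * (of q)ᵀ = 1 := by
    ext i j
    simpa [mul_apply, one_apply, dotProduct] using horth i j
  have hM : ∀ i, normalizedAdjacency d W *ᵥ q i = (1 - μ i) • q i := fun i => by
    rw [sub_smul, one_smul, ← heig, hLtil, ← normalizedLaplacian,
      normalizedLaplacian_eq_one_sub hdpos, sub_mulVec, one_mulVec, sub_sub_cancel]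
  have hr : ∀ i ≠ 0, |1 - μ i| ≤ 1 - μ' := fun i hi =>
    hμ' ▸ abs_one_sub_le_one_sub_min hmono hi
  have hr₀ : 0 ≤ 1 - μ' := (abs_nonneg _).trans (hr 1 (by simp))
  have hmix := sum_sq_randomWalk_pow_mulVec_sub_le hsym hd hdpos hQ hM (by simp [hμ0])
    (fun i hi => by linarith [hsimple i hi]) hr (sum_seedVector hS) K
  have hdecay : (1 - μ') ^ K ≤ Real.exp (-K * μ') := by
    rw [neg_mul, ← mul_neg, Real.exp_nat_mul]
    exact pow_le_pow_left₀ hr₀ (Real.one_sub_le_exp_neg μ') K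
  have hstat : (fun i => d i / vol) = (∑ j, d j)⁻¹ • d := by
    ext i; rw [Pi.smul_apply, smul_eq_mul, hvol, div_eq_inv_mul]
  have hdmax₀ : 0 ≤ dmax := hdmax ▸ (hdpos 0).le.trans (le_sup' d (mem_univ 0))
  have hdminS₀ : 0 < dminS := hdminS ▸ (lt_inf'_iff hS).mpr fun i _ => hdpos i
  rw [eNorm, Real.sqrt_le_left (by positivity), mul_pow, Real.sq_sqrt (by positivity), hH,
    (funext hvS : vS = seedVector S), hstat]
  calc _ ≤ dmax * ((1 - μ') ^ K) ^ 2 * ∑ j, seedVector S j ^ 2 / d j := hdmax ▸ hmix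
    _ ≤ dmax * Real.exp (-K * μ') ^ 2 * (dminS * #S)⁻¹ := by
      gcongr
      · exact sum_nonneg fun j _ => div_nonneg (sq_nonneg _) (hdpos j).le
      · exact hdminS ▸ sum_seedVector_sq_div_le hS fun i _ => hdpos i
    _ = dmax / (dminS * #S) * Real.exp (-K * μ') ^ 2 := by ring

/-- for every nonempty seed set S and every K ≥ 1,
‖H^K v_S − d/vol‖ ≤ √(d_max/(d_min(S)·|S|))·e^{−Kμ'}.
(N ≥ 2 is encoded by using matrices of size N+2.) -/
theorem seed_diffusion_stationary_convergence_bound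
    (N : ℕ) (W : Matrix (Fin (N + 2)) (Fin (N + 2)) ℝ)
    (hsym : W.IsSymm) (hnn : ∀ i j, 0 ≤ W i j)
    (d : Fin (N + 2) → ℝ) (hd : ∀ j, d j = ∑ i, W i j)
    (hdpos : ∀ j, 0 < d j)
    (H : Matrix (Fin (N + 2)) (Fin (N + 2)) ℝ)
    (hH : H = W * Matrix.diagonal (fun j => (d j)⁻¹))
    (vol : ℝ) (hvol : vol = ∑ j, d j)
    (Ltil : Matrix (Fin (N + 2)) (Fin (N + 2)) ℝ)
    (hLtil : Ltil = Matrix.diagonal (fun j => (Real.sqrt (d j))⁻¹) *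
      (Matrix.diagonal d - W) * Matrix.diagonal (fun j => (Real.sqrt (d j))⁻¹))
    (q : Fin (N + 2) → (Fin (N + 2) → ℝ)) (μ : Fin (N + 2) → ℝ)
    (horth : ∀ i j, q i ⬝ᵥ q j = if i = j then 1 else 0)
    (heig : ∀ i, Ltil.mulVec (q i) = μ i • q i)
    (hmono : Monotone μ) (hμ0 : μ 0 = 0) (hsimple : ∀ i, i ≠ 0 → 0 < μ i)
    (μ' : ℝ) (hμ' : μ' = min (μ 1) (2 - μ (Fin.last (N + 1))))
    (dmax : ℝ) (hdmax : dmax = Finset.univ.sup' Finset.univ_nonempty d)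
    (S : Finset (Fin (N + 2))) (hS : S.Nonempty)
    (vS : Fin (N + 2) → ℝ)
    (hvS : ∀ i, vS i = if i ∈ S then ((S.card : ℝ))⁻¹ else 0)
    (dminS : ℝ) (hdminS : dminS = S.inf' hS d)
    (K : ℕ) (hK : 1 ≤ K) :
    eNorm ((H ^ K).mulVec vS - fun i => d i / vol) ≤
      Real.sqrt (dmax / (dminS * (S.card : ℝ))) * Real.exp (-(K : ℝ) * μ') :=
  seed_diffusion_stationary_convergence_bound_general N W hsym d hd hdpos H hH vol hvol Ltil hLtil q
    μ horth heig hmono hμ0 hsimple μ' hμ' dmax hdmax S hS vS hvS dminS hdminS K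
end
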